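/- Let X be the set of rational numbers in [0,1] and G the group of all homeomorphisms of X (with its subspace topology). Then the finitary coarse space X_G is indiscrete but not λ-tight. -/

import Mathlib

open Set

/-- A coarse structure on a set `X`. -/
structure CoarseStructure (X : Type*) where
  sets : Set (Set (X × X))
  diagonal_mem : ∀ E ∈ sets, ∀ x : X, (x, x) ∈ E
  comp_mem : ∀ E ∈ sets, ∀ E' ∈ sets,
    {q : X × X | ∃ z : X, (q.1, z) ∈ E ∧ (z, q.2) ∈ E'} ∈ sets
  inv_mem : ∀ E ∈ sets, {q : X × X | (q.2, q.1) ∈ E} ∈ sets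
  subset_mem : ∀ E ∈ sets, ∀ E', E' ⊆ E → (∀ x : X, (x, x) ∈ E') → E' ∈ sets
  covers : ⋃₀ sets = Set.univ

/-- The ball `E[A]`. -/
def ball {X : Type*} (E : Set (X × X)) (A : Set X) : Set X := {y | ∃ a ∈ A, (a, y) ∈ E}

/-- A bounded subset of a coarse space. -/
def CoarseStructure.Bounded {X : Type*} (C : CoarseStructure X) (B : Set X) : Prop :=
  ∃ E ∈ C.sets, ∃ x : X, B ⊆ ball E {x}

/-- A finitary coarse space: uniformly finite balls. -/
def CoarseStructure.Finitary {X : Type*} (C : CoarseStructure X) : Prop :=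
  ∀ E ∈ C.sets, ∃ n : ℕ, ∀ x : X, (ball E {x}).Finite ∧ (ball E {x}).ncard < n

/-- The set `X^♯` of ultrafilters all of whose members are unbounded. -/
def CoarseStructure.Sharp {X : Type*} (C : CoarseStructure X) : Set (Ultrafilter X) :=
  {p | ∀ P ∈ p, ¬ C.Bounded P}

/-- The parallelity relation on ultrafilters. -/
def CoarseStructure.Parallel {X : Type*} (C : CoarseStructure X) (p q : Ultrafilter X) : Prop :=
  ∃ E ∈ C.sets, ∀ P ∈ p, ball E P ∈ q

/-- The entourage determined by a set of permutations. -/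
def entourage {X : Type*} (F : Set (Equiv.Perm X)) : Set (X × X) :=
  {q | ∃ g ∈ F, q.2 = g q.1}

/-- The finitary coarse structure `X_G` determined by a group `G` of permutations of `X`:
its entourages are the diagonal-containing subsets of `{(x,gx) : x ∈ X, g ∈ F}`
for finite `F ⊆ G` with `id ∈ F`. -/
def XGsets {X : Type*} (G : Subgroup (Equiv.Perm X)) : Set (Set (X × X)) :=
  {E | (∀ x : X, (x, x) ∈ E) ∧ ∃ F : Finset (Equiv.Perm X),
    (1 : Equiv.Perm X) ∈ F ∧ ↑F ⊆ (G : Set (Equiv.Perm X)) ∧ E ⊆ entourage ↑F}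

/-- A free ultrafilter. -/
def IsFree {X : Type*} (p : Ultrafilter X) : Prop := (p : Filter X) ≤ Filter.cofinite

/-- `X*`, the space of free ultrafilters with the Stone topology. -/
def FreeUF (X : Type*) : Type _ := {p : Ultrafilter X // IsFree p}

instance (X : Type*) : TopologicalSpace (FreeUF X) :=
  instTopologicalSpaceSubtype

/-- The orbit `Gp` of an ultrafilter under the induced action `gp = {gP : P ∈ p}`. -/
def ufOrbit {X : Type*} (G : Subgroup (Equiv.Perm X)) (p : Ultrafilter X) :
    Set (Ultrafilter X) :=
  {q | ∃ g ∈ G, q = Ultrafilter.map (⇑g) p}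

/-- The `p`-companion `Δ_p(A) = A* ∩ Gp`. -/
def compan {X : Type*} (G : Subgroup (Equiv.Perm X)) (p : Ultrafilter X) (A : Set X) :
    Set (Ultrafilter X) :=
  {q | A ∈ q ∧ q ∈ ufOrbit G p}

/-- Large subsets of `X_G`. -/
def IsLarge {X : Type*} (G : Subgroup (Equiv.Perm X)) (A : Set X) : Prop :=
  ∃ E ∈ XGsets G, ball E A = Set.univ

/-- Thick subsets of `X_G`. -/
def IsThick {X : Type*} (G : Subgroup (Equiv.Perm X)) (A : Set X) : Prop :=
  ∀ E ∈ XGsets G, ∃ a ∈ A, ball E {a} ⊆ A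

/-- Thin (discrete) subsets of `X_G`. -/
def IsThin {X : Type*} (G : Subgroup (Equiv.Perm X)) (A : Set X) : Prop :=
  ∀ E ∈ XGsets G, ∃ B : Set X, B.Finite ∧ ∀ a ∈ A \ B, ball E {a} ∩ A = {a}

/-- Sparse subsets of `X_G`. -/
def IsSparse {X : Type*} (G : Subgroup (Equiv.Perm X)) (A : Set X) : Prop :=
  ∀ p : Ultrafilter X, IsFree p → (compan G p A).Finite

/-- Scattered subsets of `X_G`. -/
def IsScattered {X : Type*} (G : Subgroup (Equiv.Perm X)) (A : Set X) : Prop :=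
  ∀ Y ⊆ A, Y.Infinite →
    ∃ p : Ultrafilter X, IsFree p ∧ Y ∈ p ∧ (compan G p Y).Finite

/-- Close subsets of a coarse space. -/
def CoarseStructure.Close {X : Type*} (C : CoarseStructure X) (A B : Set X) : Prop :=
  ∃ E ∈ C.sets, A ⊆ ball E B ∧ B ⊆ ball E A

/-- Close subsets of `X_G`. -/
def CloseG {X : Type*} (G : Subgroup (Equiv.Perm X)) (A B : Set X) : Prop :=
  ∃ E ∈ XGsets G, A ⊆ ball E B ∧ B ⊆ ball E A

/-- Linked subsets of `X_G`. -/
def LinkedG {X : Type*} (G : Subgroup (Equiv.Perm X)) (A B : Set X) : Prop :=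
  (A.Finite ∧ B.Finite) ∨
    ∃ A' ⊆ A, ∃ B' ⊆ B, A'.Infinite ∧ B'.Infinite ∧ CloseG G A' B'


open Set

/-- The `n`-th block `{g_0^{ε_0} ⋯ g_n^{ε_n} x_n : ε_i ∈ {0,1}}`. -/
def pwBlock {X : Type*} (g : ℕ → Equiv.Perm X) (x : ℕ → X) (n : ℕ) : Set X :=
  {y | ∃ ε : Fin (n + 1) → Bool,
    y = ((List.ofFn fun i : Fin (n + 1) =>
      (g i) ^ (if ε i then 1 else 0)).prod : Equiv.Perm X) (x n)}

/-- A piece-wise shifted FP-set determined by the group `G`. -/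
def IsPWShiftedFP {X : Type*} (G : Subgroup (Equiv.Perm X)) (Y : Set X) : Prop :=
  ∃ g : ℕ → Equiv.Perm X, ∃ x : ℕ → X,
    (∀ n, g n ∈ G) ∧
    (∀ m n, m ≠ n → Disjoint (pwBlock g x m) (pwBlock g x n)) ∧
    (∀ n, (pwBlock g x n).ncard = 2 ^ (n + 1)) ∧
    Y = ⋃ n, pwBlock g x n

/-- The group of all self-homeomorphisms of a topological space, as a subgroup
of the permutation group. -/
def homeoSubgroup (X : Type*) [TopologicalSpace X] : Subgroup (Equiv.Perm X) where
  carrier := {g | Continuous g ∧ Continuous g.symm}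
  one_mem' := ⟨continuous_id, continuous_id⟩
  mul_mem' := by
    rintro a b ⟨ha1, ha2⟩ ⟨hb1, hb2⟩
    refine ⟨?_, ?_⟩
    · simpa [Equiv.Perm.mul_def, Equiv.coe_trans] using ha1.comp hb1
    · simpa [Equiv.Perm.mul_def, Equiv.symm_trans_apply] using (hb2.comp ha2 : _)
  inv_mem' := by
    rintro a ⟨ha1, ha2⟩
    exact ⟨ha2, by first | simpa [Equiv.Perm.inv_def] using ha1 | exact ha1⟩


/-- The parallelity relation on ultrafilters over the coarse space `X_G`. -/
def ParallelG {X : Type*} (G : Subgroup (Equiv.Perm X)) (p q : Ultrafilter X) : Prop :=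
  ∃ E ∈ XGsets G, ∀ P ∈ p, ball E P ∈ q

/-- Linked subsets of a coarse space. -/
def CoarseStructure.Linked {X : Type*} (C : CoarseStructure X) (A B : Set X) : Prop :=
  (C.Bounded A ∧ C.Bounded B) ∨
    ∃ A' ⊆ A, ∃ B' ⊆ B, ¬ C.Bounded A' ∧ ¬ C.Bounded B' ∧ C.Close A' B'

/-- The orbit `Gp` viewed as a subset of the space `X*` of free ultrafilters. -/
def freeOrbit {X : Type*} (G : Subgroup (Equiv.Perm X)) (p : Ultrafilter X) :
    Set (FreeUF X) :=
  {q | q.1 ∈ ufOrbit G p}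

/-!
Indiscreteness. An infinite `A ⊆ ℚ ∩ [0,1]` contains a sequence `tₙ`, avoiding `0` and `1`,
that converges in `ℝ` to some `r` with `|tₙ₊₁ - r| < |tₙ - r| / 2`. Around each `tₙ` put a ball
of irrational radius (clopen in `ℚ`), the balls pairwise disjoint and `t₂ₖ`, `t₂ₖ₊₁` getting
the same radius. Translating each ball onto its partner and fixing everything else is an
involution of `ℚ ∩ [0,1]`; it is continuous also at the fixed points because the translation
lengths tend to `0`. It maps infinitely many points of `A` to other points of `A`, so `A` is
not thin.

Not λ-tight. `A = {1/(n+1)}` converges to `0`, while no infinite subset of `B`, a sequence of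
rationals converging to an irrational, converges in `ℚ ∩ [0,1]`. If infinite `A' ⊆ A`,
`B' ⊆ B` satisfy `A' ⊆ F B'` for a finite set `F` of homeomorphisms, then `A' ∩ g B'` is
infinite for some `g ∈ F`, and `g⁻¹ (A' ∩ g B') ⊆ B` is an infinite set converging to `g⁻¹ 0`.
-/

open Set Filter Topology Function

theorem exists_seq_two_mul_dist_lt {α M : Type*} [MetricSpace M] {l : Filter α} [l.NeBot]
    {f : α → M} {r : M} (hf : Tendsto f l (𝓝 r)) {P : α → Prop}
    (hP : ∀ᶠ x in l, P x ∧ f x ≠ r) :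
    ∃ t : ℕ → α, (∀ n, P (t n) ∧ f (t n) ≠ r) ∧
      ∀ m n, m < n → 2 * dist (f (t n)) r < dist (f (t m)) r := by
  refine exists_seq_of_forall_finset_exists (fun x => P x ∧ f x ≠ r)
    (fun x y => 2 * dist (f y) r < dist (f x) r) fun s hs => ?_
  have hcloser : ∀ x ∈ s, ∀ᶠ y in l, 2 * dist (f y) r < dist (f x) r := fun x hx =>
    ((tendsto_iff_dist_tendsto_zero.1 hf).eventually
      (gt_mem_nhds (half_pos (dist_pos.2 (hs x hx).2)))).mono fun y hy => by linarith
  exact (hP.and ((eventually_all_finset s).2 hcloser)).exists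

theorem tendsto_of_two_mul_dist_lt {M : Type*} [PseudoMetricSpace M] {u : ℕ → M} {r : M}
    (h : ∀ n, 2 * dist (u (n + 1)) r < dist (u n) r) : Tendsto u atTop (𝓝 r) := by
  have hle : ∀ n, dist (u n) r ≤ dist (u 0) r * (1 / 2) ^ n := by
    intro n
    induction n with
    | zero => simp
    | succ n ih => rw [pow_succ]; linarith [h n]
  rw [tendsto_iff_dist_tendsto_zero]
  refine squeeze_zero (fun n => dist_nonneg) hle ?_
  simpa using (tendsto_pow_atTop_nhds_zero_of_lt_one (r := (1 / 2 : ℝ)) (by norm_num)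
    (by norm_num)).const_mul (dist (u 0) r)

theorem add_le_dist_of_two_mul_dist_lt {M : Type*} [PseudoMetricSpace M] {y : ℕ → M} {r : M}
    (hy : ∀ m n, m < n → 2 * dist (y n) r < dist (y m) r) {ρ : ℕ → ℝ}
    (hρ : ∀ j, ρ j ≤ dist (y j) r / 4) {i j : ℕ} (hij : i ≠ j) :
    ρ i + ρ j ≤ dist (y i) (y j) := by
  wlog hlt : i < j generalizing i j
  · rw [add_comm, dist_comm]
    exact this hij.symm (hij.lt_or_gt.resolve_left hlt)
  linarith [hy i j hlt, hρ i, hρ j, dist_triangle (y i) (y j) r, dist_nonneg (x := y j) (y := r)]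

theorem continuous_of_isClopen_pieces {X ι : Type*} [PseudoMetricSpace X] {f : X → X}
    {U : ι → Set X} (hU : ∀ i, IsClopen (U i)) (hf : ∀ i, ContinuousOn f (U i))
    (hfix : ∀ x, (∀ i, x ∉ U i) → f x = x)
    (hsmall : ∀ ε > 0, ∀ᶠ i in cofinite, ∀ x ∈ U i, dist (f x) x < ε) : Continuous f := by
  refine continuous_iff_continuousAt.2 fun x₀ => ?_
  by_cases hx₀ : ∃ i, x₀ ∈ U i
  · obtain ⟨i, hi⟩ := hx₀
    exact (hf i).continuousAt ((hU i).isOpen.mem_nhds hi)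
  push Not at hx₀
  refine Metric.continuousAt_iff'.2 fun ε hε => ?_
  -- Near `x₀` only the finitely many pieces moving some point by `ε / 2` matter,
  -- and these are closed sets missing `x₀`.
  have hnear : ∀ᶠ x in 𝓝 x₀,
      (∀ i ∈ {i | ¬ ∀ x ∈ U i, dist (f x) x < ε / 2}, x ∉ U i) ∧ dist x x₀ < ε / 2 :=
    ((eventually_all_finite (hsmall _ (half_pos hε))).2 fun i _ =>
      (hU i).isClosed.isOpen_compl.mem_nhds (hx₀ i)).and (Metric.ball_mem_nhds _ (half_pos hε))
  filter_upwards [hnear] with x ⟨hxU, hxx₀⟩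
  have hmove : dist (f x) x < ε / 2 := by
    by_cases hx : ∃ i, x ∈ U i
    · obtain ⟨i, hi⟩ := hx
      by_contra hge
      exact hxU i (fun h => hge (h x hi)) hi
    · push Not at hx
      rw [hfix x hx, dist_self]
      positivity
  rw [hfix x₀ hx₀]
  linarith [dist_triangle (f x) x x₀]

def partner (j : ℕ) : ℕ := if j % 2 = 0 then j + 1 else j - 1

theorem partner_involutive : Involutive partner := fun j => by
  simp only [partner]; split <;> split <;> omega

theorem partner_ne (j : ℕ) : partner j ≠ j := by
  simp only [partner]; split <;> omega

theorem tendsto_partner_atTop : Tendsto partner atTop atTop :=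
  tendsto_atTop_mono (fun j => by simp only [partner]; split <;> omega) (tendsto_sub_atTop_nat 1)

theorem tendsto_dist_partner {M : Type*} [PseudoMetricSpace M] {y : ℕ → M} {r : M}
    (hy : Tendsto y atTop (𝓝 r)) :
    Tendsto (fun j => dist (y (partner j)) (y j)) cofinite (𝓝 0) := by
  rw [Nat.cofinite_eq_atTop]
  simpa using (hy.comp tendsto_partner_atTop).dist hy

theorem exists_irrational_le_of_involutive {ι : Type*} {σ : ι → ι} (hσ : Involutive σ)
    {μ : ι → ℝ} (hμ : ∀ i, 0 < μ i) :
    ∃ ρ : ι → ℝ, (∀ i, Irrational (ρ i) ∧ 0 < ρ i ∧ ρ i ≤ μ i) ∧ ∀ i, ρ (σ i) = ρ i := by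
  choose ρ₀ hirr hpos hlt using fun i => exists_irrational_btwn (hμ i)
  refine ⟨fun i => min (ρ₀ i) (ρ₀ (σ i)), fun i => ⟨?_, lt_min (hpos i) (hpos _),
    (min_le_left _ _).trans (hlt i).le⟩, fun i => by simp only [hσ i, min_comm]⟩
  rcases min_choice (ρ₀ i) (ρ₀ (σ i)) with h | h <;> simp only [h]
  exacts [hirr i, hirr _]

section PairSwap

variable {ι E : Type*} [SeminormedAddCommGroup E]

-- Only meaningful for pairwise disjoint balls, when `h.choose` is the unique ball containing `x`.
open Classical in
noncomputable def pairSwap (σ : ι → ι) (c : ι → E) (ρ : ι → ℝ) (x : E) : E :=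
  if h : ∃ i, x ∈ Metric.ball (c i) (ρ i) then x + (c (σ h.choose) - c h.choose) else x

variable {σ : ι → ι} {c : ι → E} {ρ : ι → ℝ}

theorem add_sub_mem_ball_iff {x a b : E} {r : ℝ} :
    x + (b - a) ∈ Metric.ball b r ↔ x ∈ Metric.ball a r := by
  simp only [Metric.mem_ball, dist_eq_norm]
  rw [show x + (b - a) - b = x - a by abel]

theorem pairSwap_of_mem (hdisj : Pairwise (Disjoint on fun i => Metric.ball (c i) (ρ i)))
    {i : ι} {x : E} (hx : x ∈ Metric.ball (c i) (ρ i)) :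
    pairSwap σ c ρ x = x + (c (σ i) - c i) := by
  have h : ∃ i, x ∈ Metric.ball (c i) (ρ i) := ⟨i, hx⟩
  have hi : h.choose = i := hdisj.eq (not_disjoint_iff.2 ⟨x, h.choose_spec, hx⟩)
  rw [pairSwap, dif_pos h, hi]

theorem pairSwap_of_forall_notMem {x : E} (hx : ∀ i, x ∉ Metric.ball (c i) (ρ i)) :
    pairSwap σ c ρ x = x :=
  dif_neg (not_exists.2 hx)

theorem pairSwap_center (hdisj : Pairwise (Disjoint on fun i => Metric.ball (c i) (ρ i)))
    {i : ι} (hi : 0 < ρ i) : pairSwap σ c ρ (c i) = c (σ i) := by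
  rw [pairSwap_of_mem hdisj (Metric.mem_ball_self hi), add_sub_cancel]

theorem pairSwap_involutive (hσ : Involutive σ) (hρ : ∀ i, ρ (σ i) = ρ i)
    (hdisj : Pairwise (Disjoint on fun i => Metric.ball (c i) (ρ i))) :
    Involutive (pairSwap σ c ρ) := by
  intro x
  by_cases hx : ∃ i, x ∈ Metric.ball (c i) (ρ i)
  · obtain ⟨i, hi⟩ := hx
    have hi' : x + (c (σ i) - c i) ∈ Metric.ball (c (σ i)) (ρ (σ i)) := by
      rwa [hρ, add_sub_mem_ball_iff]
    rw [pairSwap_of_mem hdisj hi, pairSwap_of_mem hdisj hi', hσ i]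
    abel
  · push Not at hx
    rw [pairSwap_of_forall_notMem hx, pairSwap_of_forall_notMem hx]

theorem mapsTo_pairSwap (hρ : ∀ i, ρ (σ i) = ρ i)
    (hdisj : Pairwise (Disjoint on fun i => Metric.ball (c i) (ρ i))) {S : Set E}
    (hS : ∀ i, Metric.ball (c i) (ρ i) ⊆ S) : MapsTo (pairSwap σ c ρ) S S := by
  intro x hx
  by_cases h : ∃ i, x ∈ Metric.ball (c i) (ρ i)
  · obtain ⟨i, hi⟩ := h
    rw [pairSwap_of_mem hdisj hi]
    exact hS (σ i) (by rwa [hρ, add_sub_mem_ball_iff])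
  · push Not at h
    rwa [pairSwap_of_forall_notMem h]

theorem continuous_pairSwap (hdisj : Pairwise (Disjoint on fun i => Metric.ball (c i) (ρ i)))
    (hclosed : ∀ i, IsClosed (Metric.ball (c i) (ρ i)))
    (hdisp : Tendsto (fun i => dist (c (σ i)) (c i)) cofinite (𝓝 0)) :
    Continuous (pairSwap σ c ρ) := by
  refine continuous_of_isClopen_pieces (fun i => ⟨hclosed i, Metric.isOpen_ball⟩)
    (fun i => ?_) (fun x hx => pairSwap_of_forall_notMem hx) fun ε hε => ?_
  · exact (continuousOn_id.add continuousOn_const).congr fun x hx => pairSwap_of_mem hdisj hx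
  · filter_upwards [hdisp.eventually (gt_mem_nhds hε)] with i hi x hx
    rwa [pairSwap_of_mem hdisj hx, dist_self_add_left, ← dist_eq_norm]

end PairSwap

theorem Rat.isClosed_ball_of_irrational {ρ : ℝ} (hρ : Irrational ρ) (c : ℚ) :
    IsClosed (Metric.ball c ρ) := by
  convert Metric.isClosed_closedBall (x := c) (ε := ρ) using 1
  ext x
  simp only [Metric.mem_ball, Metric.mem_closedBall]
  refine ⟨le_of_lt, fun h => h.lt_of_ne fun heq => hρ ⟨|x - c|, ?_⟩⟩
  rw [← heq, Rat.dist_eq]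
  push_cast
  rfl

theorem Rat.ball_subset_Icc {c : ℚ} {ρ : ℝ} (h0 : ρ ≤ c) (h1 : ρ ≤ 1 - c) :
    Metric.ball c ρ ⊆ Icc 0 1 := by
  intro x hx
  rw [Metric.mem_ball, Rat.dist_eq, abs_lt] at hx
  constructor
  · exact_mod_cast (show (0 : ℝ) ≤ x by linarith)
  · exact_mod_cast (show (x : ℝ) ≤ 1 by linarith)

theorem exists_mem_homeoSubgroup_of_involutive {Y : Type*} [TopologicalSpace Y] {S : Set Y}
    {f : Y → Y} (hf : Involutive f) (hc : Continuous f) (hS : MapsTo f S S) :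
    ∃ g ∈ homeoSubgroup S, ∀ x, (g x : Y) = f x := by
  have hinv : Involutive (hS.restrict f S S) := fun x => Subtype.ext (hf x)
  exact ⟨hinv.toPerm _, ⟨hc.restrict hS, hc.restrict hS⟩, fun x => rfl⟩

theorem not_isThin_of_infinite_moved {X : Type*} {G : Subgroup (Equiv.Perm X)} {A : Set X}
    {g : Equiv.Perm X} (hg : g ∈ G) (h : {a ∈ A | g a ∈ A ∧ g a ≠ a}.Infinite) :
    ¬ IsThin G A := by
  classical
  intro hthin
  have hE : entourage ↑({1, g} : Finset (Equiv.Perm X)) ∈ XGsets G := by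
    refine ⟨fun x => ⟨1, by simp, rfl⟩, {1, g}, by simp, ?_, subset_rfl⟩
    simp [Set.insert_subset_iff, G.one_mem, hg]
  obtain ⟨B, hB, hthin⟩ := hthin _ hE
  obtain ⟨a, ⟨haA, hgaA, hga⟩, haB⟩ := (h.sdiff hB).nonempty
  have hmem : g a ∈ ball (entourage ↑({1, g} : Finset (Equiv.Perm X))) {a} ∩ A :=
    ⟨⟨a, rfl, g, by simp, rfl⟩, hgaA⟩
  rw [hthin a ⟨haA, haB⟩] at hmem
  exact hga hmem

theorem cofinite_inf_principal_range_le_map {α β : Type*} (u : α → β) :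
    cofinite ⊓ 𝓟 (range u) ≤ map u cofinite := by
  intro S hS
  rw [mem_inf_principal, mem_cofinite]
  refine ((mem_cofinite.1 hS).image u).subset fun y hy => ?_
  obtain ⟨⟨n, rfl⟩, hn⟩ : y ∈ range u ∧ y ∉ S := Classical.not_imp.1 hy
  exact ⟨n, hn, rfl⟩

theorem cofinite_inf_principal_image_le_nhds {X Y : Type*} [TopologicalSpace X]
    [TopologicalSpace Y] {e : X ≃ Y} (he : Continuous e) {C : Set X} {a : X}
    (h : cofinite ⊓ 𝓟 C ≤ 𝓝 a) : cofinite ⊓ 𝓟 (e '' C) ≤ 𝓝 (e a) :=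
  calc cofinite ⊓ 𝓟 (e '' C) ≤ map e (cofinite ⊓ 𝓟 C) := by
        rw [map_inf e.injective, map_principal]
        exact inf_le_inf_right _ e.surjective.le_map_cofinite
    _ ≤ map e (𝓝 a) := map_mono h
    _ ≤ 𝓝 (e a) := he.tendsto a

theorem infinite_range_of_tendsto {X : Type*} [TopologicalSpace X] [T1Space X] {u : ℕ → X}
    {a : X} (hu : Tendsto u atTop (𝓝 a)) (hne : ∀ n, u n ≠ a) : (range u).Infinite :=
  fun hfin => by
    obtain ⟨n, hn⟩ := hfin.isClosed.mem_of_tendsto hu (Eventually.of_forall mem_range_self)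
    exact hne n hn

theorem not_cofinite_inf_principal_le_nhds {X Y : Type*} [TopologicalSpace X]
    [TopologicalSpace Y] [T2Space Y] {φ : X → Y} (hφ : Continuous φ) {u : ℕ → X} {β : Y}
    (hu : Tendsto (φ ∘ u) atTop (𝓝 β)) (hβ : β ∉ range φ) {B : Set X} (hB : B ⊆ range u)
    (hinf : B.Infinite) (x : X) : ¬ cofinite ⊓ 𝓟 B ≤ 𝓝 x := by
  intro hx
  have := hinf.cofinite_inf_principal_neBot
  have hlim : Tendsto φ (cofinite ⊓ 𝓟 B) (𝓝 β) :=
    (tendsto_map'_iff.2 (Nat.cofinite_eq_atTop ▸ hu)).mono_left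
      ((inf_le_inf_left _ (principal_mono.2 hB)).trans (cofinite_inf_principal_range_le_map u))
  exact hβ ⟨x, tendsto_nhds_unique ((hφ.tendsto x).mono_left hx) hlim⟩

theorem not_linkedG_homeoSubgroup {X : Type*} [TopologicalSpace X] {A B : Set X} {a : X}
    (hA : A.Infinite) (ha : cofinite ⊓ 𝓟 A ≤ 𝓝 a)
    (hB : ∀ B' ⊆ B, B'.Infinite → ∀ x, ¬ cofinite ⊓ 𝓟 B' ≤ 𝓝 x) :
    ¬ LinkedG (homeoSubgroup X) A B := by
  rintro (⟨hAfin, -⟩ | ⟨A', hA'A, B', hB'B, hA', -, E, ⟨-, F, -, hFG, hEF⟩, hA'B', -⟩)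
  · exact hA hAfin
  have hcover : A' ⊆ ⋃ g ∈ F, A' ∩ g '' B' := fun x hx => by
    obtain ⟨b, hb, hbx⟩ := hA'B' hx
    obtain ⟨g, hgF, hg⟩ := hEF hbx
    exact mem_biUnion hgF ⟨hx, b, hb, hg.symm⟩
  obtain ⟨g, hgF, hinf⟩ : ∃ g ∈ F, (A' ∩ g '' B').Infinite := by
    by_contra! h
    exact hA' ((F.finite_toSet.biUnion fun g hg => h g hg).subset hcover)
  refine hB _ ?_ (hinf.image g.symm.injective.injOn) (g.symm a)
    (cofinite_inf_principal_image_le_nhds (hFG hgF).2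
      ((inf_le_inf_left _ (principal_mono.2 (inter_subset_left.trans hA'A))).trans ha))
  rintro _ ⟨_, ⟨-, b, hb, rfl⟩, rfl⟩
  simpa using hB'B hb

abbrev RatUnitInterval : Type := Set.Icc (0 : ℚ) 1

namespace RatUnitInterval

noncomputable def toReal (x : RatUnitInterval) : ℝ := ((x : ℚ) : ℝ)

theorem toReal_injective : Injective toReal :=
  fun _ _ h => Subtype.ext (Rat.cast_injective h)

theorem continuous_toReal : Continuous toReal :=
  Rat.continuous_coe_real.comp continuous_subtype_val

theorem dist_toReal (x y : RatUnitInterval) : dist (toReal x) (toReal y) = dist x y :=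
  Rat.dist_cast _ _

theorem toReal_mem_Icc (x : RatUnitInterval) : toReal x ∈ Icc 0 1 := by
  obtain ⟨h0, h1⟩ := x.2
  exact ⟨by unfold toReal; exact_mod_cast h0, by unfold toReal; exact_mod_cast h1⟩

theorem exists_seq_two_mul_dist_lt_of_infinite {A : Set RatUnitInterval} (hA : A.Infinite) :
    ∃ (r : ℝ) (t : ℕ → RatUnitInterval),
      (∀ n, (t n ∈ A ∧ toReal (t n) ≠ 0 ∧ toReal (t n) ≠ 1) ∧ toReal (t n) ≠ r) ∧
      ∀ m n, m < n → 2 * dist (toReal (t n)) r < dist (toReal (t m)) r := by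
  have := hA.cofinite_inf_principal_neBot
  let U := Ultrafilter.of (cofinite ⊓ 𝓟 A)
  obtain ⟨r, -, hr⟩ := isCompact_Icc.ultrafilter_le_nhds (U.map toReal)
    (by rw [Ultrafilter.coe_map, le_principal_iff]; exact mem_map.2 (univ_mem' toReal_mem_Icc))
  rw [Ultrafilter.coe_map] at hr
  have hfin : (toReal ⁻¹' {0, 1, r}).Finite := (toFinite _).preimage toReal_injective.injOn
  refine ⟨r, exists_seq_two_mul_dist_lt (l := (U : Filter RatUnitInterval))
    (P := fun x => x ∈ A ∧ toReal x ≠ 0 ∧ toReal x ≠ 1) hr ?_⟩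
  filter_upwards [Ultrafilter.of_le (cofinite ⊓ 𝓟 A)
    (inter_mem_inf hfin.compl_mem_cofinite (mem_principal_self A))] with x ⟨hx, hxA⟩
  simp only [mem_compl_iff, mem_preimage, mem_insert_iff, mem_singleton_iff, not_or] at hx
  exact ⟨⟨hxA, hx.1, hx.2.1⟩, hx.2.2⟩

theorem exists_mem_homeoSubgroup_pairing {t : ℕ → RatUnitInterval} {ρ : ℕ → ℝ}
    (hρ : ∀ j, Irrational (ρ j) ∧ 0 < ρ j) (hρσ : ∀ j, ρ (partner j) = ρ j)
    (hsub : ∀ j, Metric.ball (t j : ℚ) (ρ j) ⊆ Icc 0 1)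
    (hsep : ∀ i j, i ≠ j → ρ i + ρ j ≤ dist (t i) (t j))
    (hdisp : Tendsto (fun j => dist (t (partner j)) (t j)) cofinite (𝓝 0)) :
    ∃ g ∈ homeoSubgroup RatUnitInterval, ∀ j, g (t j) = t (partner j) := by
  have hdisj : Pairwise (Disjoint on fun j => Metric.ball (t j : ℚ) (ρ j)) :=
    fun i j hij => Metric.ball_disjoint_ball (hsep i j hij)
  obtain ⟨g, hg, hgf⟩ := exists_mem_homeoSubgroup_of_involutive
    (pairSwap_involutive partner_involutive hρσ hdisj)
    (continuous_pairSwap hdisj (fun j => Rat.isClosed_ball_of_irrational (hρ j).1 _) hdisp)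
    (mapsTo_pairSwap hρσ hdisj hsub)
  exact ⟨g, hg, fun j => Subtype.ext ((hgf (t j)).trans (pairSwap_center hdisj (hρ j).2))⟩

theorem not_isThin_homeoSubgroup {A : Set RatUnitInterval} (hA : A.Infinite) :
    ¬ IsThin (homeoSubgroup RatUnitInterval) A := by
  obtain ⟨r, t, ht, hdecay⟩ := exists_seq_two_mul_dist_lt_of_infinite hA
  have hμ : ∀ j, 0 < min (dist (toReal (t j)) r / 4) (min (toReal (t j)) (1 - toReal (t j))) := by
    intro j
    obtain ⟨⟨-, h0, h1⟩, hr⟩ := ht j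
    obtain ⟨h0', h1'⟩ := toReal_mem_Icc (t j)
    exact lt_min (div_pos (dist_pos.2 hr) four_pos)
      (lt_min (h0'.lt_of_ne' h0) (sub_pos.2 (h1'.lt_of_ne h1)))
  obtain ⟨ρ, hρ, hρσ⟩ := exists_irrational_le_of_involutive partner_involutive hμ
  have hsep : ∀ i j, i ≠ j → ρ i + ρ j ≤ dist (t i) (t j) := fun i j hij => by
    simpa only [dist_toReal] using add_le_dist_of_two_mul_dist_lt hdecay
      (fun j => (hρ j).2.2.trans (min_le_left _ _)) hij
  have hsub : ∀ j, Metric.ball (t j : ℚ) (ρ j) ⊆ Icc 0 1 := fun j =>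
    Rat.ball_subset_Icc ((hρ j).2.2.trans ((min_le_right _ _).trans (min_le_left _ _)))
      ((hρ j).2.2.trans ((min_le_right _ _).trans (min_le_right _ _)))
  have hdisp : Tendsto (fun j => dist (t (partner j)) (t j)) cofinite (𝓝 0) := by
    simpa only [dist_toReal] using tendsto_dist_partner
      (tendsto_of_two_mul_dist_lt (u := fun n => toReal (t n)) fun n =>
        hdecay n (n + 1) n.lt_succ_self)
  obtain ⟨g, hg, hgt⟩ :=
    exists_mem_homeoSubgroup_pairing (fun j => ⟨(hρ j).1, (hρ j).2.1⟩) hρσ hsub hsep hdisp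
  have hne : ∀ i j, i ≠ j → t i ≠ t j := fun i j hij h => by
    have := hsep i j hij
    rw [h, dist_self] at this
    linarith [(hρ i).2.1, (hρ j).2.1]
  refine not_isThin_of_infinite_moved hg
    ((infinite_range_of_injective fun i j => not_imp_not.1 (hne i j)).mono ?_)
  rintro _ ⟨j, rfl⟩
  exact ⟨(ht j).1.1, by rw [hgt]; exact (ht _).1.1, by rw [hgt]; exact hne _ _ (partner_ne j)⟩

def oneDivSucc (n : ℕ) : RatUnitInterval :=
  ⟨1 / (n + 1), by positivity, div_le_one_of_le₀ (by simp) (by positivity)⟩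

theorem tendsto_oneDivSucc : Tendsto oneDivSucc atTop (𝓝 ⟨0, le_rfl, zero_le_one⟩) :=
  tendsto_subtype_rng.2 tendsto_one_div_add_atTop_nhds_zero_nat

theorem oneDivSucc_ne_zero (n : ℕ) : oneDivSucc n ≠ ⟨0, le_rfl, zero_le_one⟩ :=
  fun h => n.cast_add_one_ne_zero (by simpa [oneDivSucc] using congrArg Subtype.val h)

noncomputable def floorApprox {α : ℝ} (hα : α ∈ Icc 0 1) (n : ℕ) : RatUnitInterval :=
  ⟨⌊α * n⌋₊ / n, by positivity, div_le_one_of_le₀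
    (by exact_mod_cast (Nat.floor_le_of_le (mul_le_of_le_one_left n.cast_nonneg hα.2)))
    n.cast_nonneg⟩

theorem tendsto_floorApprox {α : ℝ} (hα : α ∈ Icc 0 1) :
    Tendsto (toReal ∘ floorApprox hα) atTop (𝓝 α) := by
  refine ((tendsto_nat_floor_mul_div_atTop hα.1).comp tendsto_natCast_atTop_atTop).congr
    fun n => ?_
  simp [toReal, floorApprox]

theorem not_forall_linkedG_homeoSubgroup :
    ¬ ∀ A B : Set RatUnitInterval, A.Infinite → B.Infinite →
      LinkedG (homeoSubgroup RatUnitInterval) A B := by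
  obtain ⟨α, hα, hα0, hα1⟩ := exists_irrational_btwn (zero_lt_one' ℝ)
  have hαX : α ∉ range toReal := fun ⟨x, hx⟩ => hα ⟨x, hx⟩
  have hA := infinite_range_of_tendsto tendsto_oneDivSucc oneDivSucc_ne_zero
  have hlim := tendsto_floorApprox ⟨hα0.le, hα1.le⟩
  have hB : (range (floorApprox ⟨hα0.le, hα1.le⟩)).Infinite := by
    refine Infinite.of_image toReal ?_
    rw [← range_comp]
    exact infinite_range_of_tendsto hlim fun n hn => hαX ⟨_, hn⟩
  exact fun h => not_linkedG_homeoSubgroup hA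
    ((cofinite_inf_principal_range_le_map _).trans (Nat.cofinite_eq_atTop ▸ tendsto_oneDivSucc))
    (fun B' hB' hinf => not_cofinite_inf_principal_le_nhds continuous_toReal hlim hαX hB' hinf)
    (h _ _ hA hB)

end RatUnitInterval

/-- For `X` the rationals of `[0,1]` and `G` the group of all
homeomorphisms of `X`, the finitary coarse space `X_G` is indiscrete but not
λ-tight. -/
theorem rationals_indiscrete_not_lambdaTight :
    (∀ A : Set ↥(Set.Icc (0 : ℚ) 1), A.Infinite →
        ¬ IsThin (homeoSubgroup ↥(Set.Icc (0 : ℚ) 1)) A) ∧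
    ¬ (∀ A B : Set ↥(Set.Icc (0 : ℚ) 1), A.Infinite → B.Infinite →
        LinkedG (homeoSubgroup ↥(Set.Icc (0 : ℚ) 1)) A B) :=
  ⟨fun _ => RatUnitInterval.not_isThin_homeoSubgroup,
    RatUnitInterval.not_forall_linkedG_homeoSubgroup⟩
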